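/- Let G and G' be achievement positional games on disjoint vertex sets. If o(G)∈{L, L^-} and o(G')=N, then Left has a winning strategy on G∪G' as first player, i.e. o(G∪G')∈{L, L^-, N}. -/

import Mathlib

/-!
Left combines a strategy `σ'` winning `G'` as first player with a strategy `τ` not losing `G`
as second player. She opens in `G'`, answers every Right move in `G` with `τ` as long as `G`
has a free vertex, and otherwise plays `σ'` in `G'`. When she must move in `G'` although
Right has not answered there (after Right filled `G`, or picked a vertex she had already
imagined him taking), she first imagines Right picking some free vertex of `G'`. Her imagined
play on `G'` thus contains her real moves there and a superset of Right's, so `σ'` still keeps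
Right from filling a red edge of `G'` and fills a blue one no later than the union is full;
`τ` keeps Right from filling a red edge of `G`. The outcome is then `L`, `L⁻` or `N`
according to the result when Right starts, which exists by determinacy.
-/

namespace APG

/-- The two players: Left and Right. -/
inductive Player : Type
  | L : Player
  | R : Player
deriving DecidableEq, Repr

/-- The opponent of a player. -/
def Player.other : Player → Player
  | .L => .R
  | .R => .L

/-- An achievement positional game: a finite vertex set together with the set of
blue edges (Left's winning sets) and the set of red edges (Right's winning sets). -/
structure Game : Type where
  V : Finset ℕ
  EL : Finset (Finset ℕ)
  ER : Finset (Finset ℕ)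

/-- The edges are nonempty subsets of the vertex set. -/
def WellFormed (G : Game) : Prop :=
  (∀ e ∈ G.EL, e ⊆ G.V ∧ e.Nonempty) ∧ (∀ e ∈ G.ER, e ⊆ G.V ∧ e.Nonempty)

/-- The winning sets of a given player. -/
def Game.edges (G : Game) : Player → Finset (Finset ℕ)
  | .L => G.EL
  | .R => G.ER

/-- The player who makes the `i`-th move (0-indexed) when `s` moves first. -/
def mover (s : Player) (i : ℕ) : Player := if i % 2 = 0 then s else s.other

/-- The set of vertices picked by player `p` along the history `h`
(the chronological list of the moves played so far), when `s` moved first. -/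
def picked (s p : Player) (h : List ℕ) : Finset ℕ :=
  ((Finset.range h.length).filter fun i => mover s i = p).image fun i => h.getD i 0

/-- The set `S` of picked vertices fills some edge of `E`. -/
def fills (E : Finset (Finset ℕ)) (S : Finset ℕ) : Prop := ∃ e ∈ E, e ⊆ S

/-- The game is over: some player has picked all the vertices of one of their edges. -/
def ended (G : Game) (s : Player) (h : List ℕ) : Prop :=
  fills G.EL (picked s .L h) ∨ fills G.ER (picked s .R h)

/-- `h` is a legal history: no vertex is picked twice, every picked vertex belongs to
the board, and no move is made after the game has ended. -/
def ValidHist (G : Game) (s : Player) (h : List ℕ) : Prop :=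
  h.Nodup ∧ (∀ x ∈ h, x ∈ G.V) ∧ ∀ k, k < h.length → ¬ ended G s (h.take k)

/-- A strategy: a map assigning to each position (history) a vertex to pick. -/
abbrev Strategy := List ℕ → ℕ

/-- Along `h`, every move of player `p` agrees with the strategy `σ`. -/
def Follows (s p : Player) (σ : Strategy) (h : List ℕ) : Prop :=
  ∀ k, k < h.length → mover s k = p → h.getD k 0 = σ (h.take k)

/-- A finished play: either the game has ended or all vertices have been picked. -/
def Complete (G : Game) (s : Player) (h : List ℕ) : Prop :=
  ended G s h ∨ h.length = G.V.card

/-- The strategy `σ` of player `p` always suggests a legal move (an unpicked vertex)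
whenever the game is not over and it is `p`'s turn. -/
def Legal (G : Game) (s p : Player) (σ : Strategy) : Prop :=
  ∀ h, ValidHist G s h → Follows s p σ h → ¬ ended G s h → h.length < G.V.card →
    mover s h.length = p → σ h ∈ G.V ∧ σ h ∉ h

/-- Player `p` has a winning strategy on `G` when `s` moves first: following it,
every finished play ends with `p` having filled one of their edges (and, the game
having ended right there, the opponent has not filled an edge first). -/
def WinsAs (G : Game) (s p : Player) : Prop :=
  ∃ σ : Strategy, Legal G s p σ ∧
    ∀ h, ValidHist G s h → Follows s p σ h → Complete G s h →
      fills (G.edges p) (picked s p h)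

/-- Player `p` has a non-losing strategy on `G` when `s` moves first: following it,
the opponent never fills one of their edges. -/
def NonLosingAs (G : Game) (s p : Player) : Prop :=
  ∃ σ : Strategy, Legal G s p σ ∧
    ∀ h, ValidHist G s h → Follows s p σ h → Complete G s h →
      ¬ fills (G.edges p.other) (picked s p.other h)

/-- The possible results of the game, for a fixed starting player. -/
inductive Result : Type
  | Lwin : Result
  | draw : Result
  | Rwin : Result
deriving DecidableEq, Repr

/-- The result of `G` with optimal play, when `s` moves first, is `r`:
a win for a player means that player has a winning strategy, a draw means
both players have non-losing strategies. -/
def resultIs (G : Game) (s : Player) : Result → Prop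
  | .Lwin => WinsAs G s .L
  | .Rwin => WinsAs G s .R
  | .draw => NonLosingAs G s .L ∧ NonLosingAs G s .R

/-- An outcome: the pair of results with optimal play
(when Left starts, when Right starts). -/
abbrev Outcome := Result × Result

/-- `G` has outcome `o`. -/
def hasOutcome (G : Game) (o : Outcome) : Prop :=
  resultIs G .L o.1 ∧ resultIs G .R o.2

/-- Numerical value of a result, from Left's point of view:
Right wins < draw < Left wins. -/
def Result.val : Result → ℕ
  | .Rwin => 0
  | .draw => 1
  | .Lwin => 2

/-- The partial order `≤_L` on outcomes, comparing both components simultaneously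
from Left's point of view. -/
def outLE (o o' : Outcome) : Prop := o.1.val ≤ o'.1.val ∧ o.2.val ≤ o'.2.val

def oL : Outcome := (.Lwin, .Lwin)
def oLminus : Outcome := (.Lwin, .draw)
def oN : Outcome := (.Lwin, .Rwin)
def oD : Outcome := (.draw, .draw)
def oRminus : Outcome := (.draw, .Rwin)
def oR : Outcome := (.Rwin, .Rwin)

/-- The updated game `G_u` after Left has picked `u`. -/
def subL (G : Game) (u : ℕ) : Game where
  V := G.V.erase u
  EL := G.EL.image fun e => e.erase u
  ER := G.ER.filter fun e => u ∉ e

/-- The updated game `G^u` after Right has picked `u`. -/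
def subR (G : Game) (u : ℕ) : Game where
  V := G.V.erase u
  EL := G.EL.filter fun e => u ∉ e
  ER := G.ER.image fun e => e.erase u

/-- The updated game `G_u^v` after Left has picked `u` and Right has picked `v`. -/
def updLR (G : Game) (u v : ℕ) : Game where
  V := (G.V.erase u).erase v
  EL := (G.EL.filter fun e => v ∉ e).image fun e => e.erase u
  ER := (G.ER.filter fun e => u ∉ e).image fun e => e.erase v

/-- The disjoint union of two games. -/
def gunion (G G' : Game) : Game where
  V := G.V ∪ G'.V
  EL := G.EL ∪ G'.EL
  ER := G.ER ∪ G'.ER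

@[simp] lemma Player.other_other (p : Player) : p.other.other = p := by cases p <;> rfl

@[simp] lemma Player.other_ne (p : Player) : p.other ≠ p := by cases p <;> decide

lemma Player.eq_other_of_ne {q p : Player} (h : q ≠ p) : q = p.other := by
  cases q <;> cases p <;> simp_all [Player.other]

lemma mover_of_even {s : Player} {n : ℕ} (h : n % 2 = 0) : mover s n = s := if_pos h

lemma mover_of_odd {s : Player} {n : ℕ} (h : n % 2 = 1) : mover s n = s.other := if_neg (by omega)

lemma mover_eq_self_iff {s : Player} {n : ℕ} : mover s n = s ↔ n % 2 = 0 := by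
  unfold mover
  split_ifs with h
  · simpa using h
  · simpa using h

section Histories

variable {G : Game} {s p : Player} {σ : Strategy} {h l : List ℕ} {x : ℕ}

@[simp] lemma picked_nil : picked s p [] = ∅ := by simp [picked]

lemma validHist_nil : ValidHist G s [] := by simp [ValidHist]

lemma follows_nil : Follows s p σ [] := by simp [Follows]

lemma picked_append :
    picked s p (h ++ [x]) =
      if mover s h.length = p then insert x (picked s p h) else picked s p h := by
  have hold : ∀ T ⊆ Finset.range h.length,
      T.image (fun i => (h ++ [x]).getD i 0) = T.image fun i => h.getD i 0 :=
    fun T hT => Finset.image_congr fun i hi =>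
      List.getD_append _ _ _ _ (Finset.mem_range.mp (hT hi))
  have hnew : (h ++ [x]).getD h.length 0 = x := by simp
  unfold picked
  rw [List.length_append, List.length_singleton, Finset.range_add_one, Finset.filter_insert]
  split_ifs
  · rw [Finset.image_insert, hnew, hold _ (Finset.filter_subset _ _)]
  · rw [hold _ (Finset.filter_subset _ _)]

lemma picked_append_of_eq (hm : mover s h.length = p) :
    picked s p (h ++ [x]) = insert x (picked s p h) := by
  rw [picked_append, if_pos hm]

lemma picked_append_of_ne (hm : mover s h.length ≠ p) : picked s p (h ++ [x]) = picked s p h := by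
  rw [picked_append, if_neg hm]

lemma picked_subset : picked s p h ⊆ h.toFinset := by
  intro y hy
  simp only [picked, Finset.mem_image, Finset.mem_filter, Finset.mem_range] at hy
  obtain ⟨i, ⟨hi, -⟩, rfl⟩ := hy
  rw [List.mem_toFinset, List.getD_eq_getElem _ _ hi]
  exact List.getElem_mem hi

lemma picked_union : picked s .L h ∪ picked s .R h = h.toFinset := by
  refine Finset.Subset.antisymm (Finset.union_subset picked_subset picked_subset) fun y hy => ?_
  obtain ⟨i, hi, rfl⟩ := List.mem_iff_getElem.mp (List.mem_toFinset.mp hy)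
  have hmem : h[i] ∈ picked s (mover s i) h := by
    simp only [picked, Finset.mem_image, Finset.mem_filter, Finset.mem_range]
    exact ⟨i, ⟨hi, rfl⟩, List.getD_eq_getElem _ _ hi⟩
  cases hq : mover s i <;> rw [hq] at hmem
  · exact Finset.mem_union_left _ hmem
  · exact Finset.mem_union_right _ hmem

lemma validHist_append_iff :
    ValidHist G s (l ++ [x]) ↔ ValidHist G s l ∧ x ∈ G.V ∧ x ∉ l ∧ ¬ ended G s l := by
  have htake : ∀ k < l.length, (l ++ [x]).take k = l.take k :=
    fun k hk => List.take_append_of_le_length hk.le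
  simp only [ValidHist, List.length_append, List.length_singleton, Nat.forall_lt_succ_right,
    List.take_left, List.nodup_append, List.nodup_singleton, List.mem_append, List.mem_singleton]
  constructor
  · rintro ⟨⟨hnd, -, hx⟩, hV, hend, hlast⟩
    refine ⟨⟨hnd, fun y hy => hV y (Or.inl hy), fun k hk => htake k hk ▸ hend k hk⟩,
      hV x (Or.inr rfl), fun hxl => hx x hxl x rfl rfl, hlast⟩
  · rintro ⟨⟨hnd, hV, hend⟩, hxV, hxl, hlast⟩
    refine ⟨⟨hnd, trivial, ?_⟩, ?_, fun k hk => htake k hk ▸ hend k hk, hlast⟩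
    · rintro y hy _ rfl rfl; exact hxl hy
    · rintro y (hy | rfl)
      exacts [hV y hy, hxV]

lemma follows_append_iff :
    Follows s p σ (l ++ [x]) ↔ Follows s p σ l ∧ (mover s l.length = p → x = σ l) := by
  have hlast : (l ++ [x]).getD l.length 0 = x := by simp
  have hprev : ∀ k < l.length,
      (l ++ [x]).getD k 0 = l.getD k 0 ∧ (l ++ [x]).take k = l.take k :=
    fun k hk => ⟨List.getD_append _ _ _ _ hk, List.take_append_of_le_length hk.le⟩
  simp only [Follows, List.length_append, List.length_singleton, Nat.forall_lt_succ_right,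
    List.take_left, hlast]
  refine and_congr_left' (forall₂_congr fun k hk => ?_)
  rw [(hprev k hk).1, (hprev k hk).2]

lemma ValidHist.length_le_card (hv : ValidHist G s h) : h.length ≤ G.V.card := by
  rw [← List.toFinset_card_of_nodup hv.1]
  exact Finset.card_le_card fun y hy => hv.2.1 y (List.mem_toFinset.mp hy)

lemma ValidHist.exists_free (hv : ValidHist G s h) (hlen : h.length < G.V.card) :
    ∃ y ∈ G.V, y ∉ h := by
  by_contra! hfull
  have : G.V ⊆ h.toFinset := fun y hy => List.mem_toFinset.mpr (hfull y hy)
  have := Finset.card_le_card this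
  rw [List.toFinset_card_of_nodup hv.1] at this
  omega

lemma ValidHist.length_lt_card (hv : ValidHist G s h) (hx : x ∈ G.V) (hxh : x ∉ h) :
    h.length < G.V.card := by
  rw [← List.toFinset_card_of_nodup hv.1]
  refine Finset.card_lt_card ⟨fun y hy => hv.2.1 y (List.mem_toFinset.mp hy), fun hsub => ?_⟩
  exact hxh (List.mem_toFinset.mp (hsub hx))

lemma ValidHist.mem_of_length_eq (hv : ValidHist G s h) (hlen : h.length = G.V.card)
    (hx : x ∈ G.V) : x ∈ h := by
  by_contra hxh
  exact (hv.length_lt_card hx hxh).ne hlen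

lemma ValidHist.length_eq_card (hv : ValidHist G s h) (hall : ∀ y ∈ G.V, y ∈ h) :
    h.length = G.V.card := by
  refine hv.length_le_card.antisymm (not_lt.mp fun hlt => ?_)
  obtain ⟨y, hy, hyh⟩ := hv.exists_free hlt
  exact hyh (hall y hy)

end Histories

lemma fills_of_subset {E E' : Finset (Finset ℕ)} {S : Finset ℕ} (hE : E ⊆ E')
    (hf : fills E S) : fills E' S :=
  let ⟨e, he, hes⟩ := hf; ⟨e, hE he, hes⟩

lemma ended_of_fills {G : Game} {s q : Player} {h : List ℕ}
    (hf : fills (G.edges q) (picked s q h)) : ended G s h := by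
  cases q
  exacts [Or.inl hf, Or.inr hf]

noncomputable def fresh (V : Finset ℕ) (h : List ℕ) : ℕ :=
  Classical.epsilon fun y => y ∈ V ∧ y ∉ h

lemma fresh_spec {V : Finset ℕ} {h : List ℕ} (hy : ∃ y ∈ V, y ∉ h) :
    fresh V h ∈ V ∧ fresh V h ∉ h :=
  Classical.epsilon_spec (by simpa only [exists_prop] using hy)

def Wins (G : Game) (s p : Player) (σ : Strategy) : Prop :=
  ∀ h, ValidHist G s h → Follows s p σ h → Complete G s h →
    fills (G.edges p) (picked s p h)

def Safe (G : Game) (s p : Player) (σ : Strategy) : Prop :=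
  ∀ h, ValidHist G s h → Follows s p σ h → ¬ fills (G.edges p.other) (picked s p.other h)

section Strategies

variable {G : Game} {s p : Player} {σ : Strategy}

lemma Legal.mem_of_not_complete {h : List ℕ} (hσ : Legal G s p σ) (hv : ValidHist G s h)
    (hf : Follows s p σ h) (hc : ¬ Complete G s h) (hm : mover s h.length = p) :
    σ h ∈ G.V ∧ σ h ∉ h :=
  hσ h hv hf (fun he => hc (Or.inl he))
    (hv.length_le_card.lt_of_ne fun hl => hc (Or.inr hl)) hm

/-- Only the last mover can have just filled an edge, and the game did not end before. -/
lemma Wins.safe (hWF : WellFormed G) (hw : Wins G s p σ) : Safe G s p σ := by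
  intro h hv hf hopp
  have hown := hw h hv hf (Or.inl (ended_of_fills hopp))
  rcases List.eq_nil_or_concat h with rfl | ⟨l, x, rfl⟩
  · obtain ⟨e, he, hes⟩ := hown
    have hne : e.Nonempty := by cases p; exacts [(hWF.1 e he).2, (hWF.2 e he).2]
    rw [picked_nil, Finset.subset_empty] at hes
    exact hne.ne_empty hes
  · rw [List.concat_eq_append] at hv hopp hown
    have hl := (validHist_append_iff.mp hv).2.2.2
    by_cases hm : mover s l.length = p
    · rw [picked_append_of_ne (by rw [hm]; exact (Player.other_ne p).symm)] at hopp
      exact hl (ended_of_fills hopp)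
    · rw [picked_append_of_ne hm] at hown
      exact hl (ended_of_fills hown)

lemma safe_of_nonLosing
    (hnl : ∀ h, ValidHist G s h → Follows s p σ h → Complete G s h →
      ¬ fills (G.edges p.other) (picked s p.other h)) : Safe G s p σ :=
  fun h hv hf hopp => hnl h hv hf (Or.inl (ended_of_fills hopp)) hopp

end Strategies

section Determinacy

variable {G : Game} {s p q : Player} {W : List ℕ → Prop} {h : List ℕ}

open Classical in
/-- `p` can force the play from `h` to a finished play satisfying `W`. -/
noncomputable def force (G : Game) (s p : Player) (W : List ℕ → Prop) (h : List ℕ) : Prop :=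
  if ended G s h then W h
  else if h.length < G.V.card then
    (if mover s h.length = p
     then ∃ x, x ∈ G.V ∧ x ∉ h ∧ force G s p W (h ++ [x])
     else ∀ x, x ∈ G.V → x ∉ h → force G s p W (h ++ [x]))
  else W h
termination_by G.V.card - h.length
decreasing_by all_goals (simp only [List.length_append, List.length_singleton]; omega)

lemma force_of_ended (he : ended G s h) : force G s p W h ↔ W h := by
  rw [force]; simp [he]

lemma force_of_full (he : ¬ ended G s h) (hl : ¬ h.length < G.V.card) :
    force G s p W h ↔ W h := by
  rw [force]; simp [he, hl]

lemma force_of_turn (he : ¬ ended G s h) (hl : h.length < G.V.card) (hm : mover s h.length = p) :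
    force G s p W h ↔ ∃ x, x ∈ G.V ∧ x ∉ h ∧ force G s p W (h ++ [x]) := by
  rw [force]; simp [he, hl, hm]

lemma force_of_wait (he : ¬ ended G s h) (hl : h.length < G.V.card) (hm : mover s h.length ≠ p) :
    force G s p W h ↔ ∀ x, x ∈ G.V → x ∉ h → force G s p W (h ++ [x]) := by
  rw [force]; simp [he, hl, hm]

open Classical in
noncomputable def forcingStrategy (G : Game) (s p : Player) (W : List ℕ → Prop) : Strategy :=
  fun h => if hx : ∃ x, x ∈ G.V ∧ x ∉ h ∧ force G s p W (h ++ [x]) then hx.choose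
    else fresh G.V h

lemma forcingStrategy_legal : Legal G s p (forcingStrategy G s p W) := by
  intro h hv _ _ hlen _
  unfold forcingStrategy
  split_ifs with hx
  exacts [⟨hx.choose_spec.1, hx.choose_spec.2.1⟩, fresh_spec (hv.exists_free hlen)]

lemma force_of_follows (h0 : force G s p W []) :
    ∀ h, ValidHist G s h → Follows s p (forcingStrategy G s p W) h → force G s p W h := by
  intro h
  induction h using List.reverseRecOn with
  | nil => exact fun _ _ => h0
  | append_singleton l x ih =>
    intro hv hf
    obtain ⟨hvl, hxV, hxl, hne⟩ := validHist_append_iff.mp hv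
    obtain ⟨hfl, hx⟩ := follows_append_iff.mp hf
    have hlen : l.length < G.V.card := hvl.length_lt_card hxV hxl
    have hfor := ih hvl hfl
    by_cases hm : mover s l.length = p
    · rw [force_of_turn hne hlen hm] at hfor
      rw [hx hm, forcingStrategy, dif_pos hfor]
      exact hfor.choose_spec.2.2
    · exact (force_of_wait hne hlen hm).mp hfor x hxV hxl

lemma force_of_follows_complete (h0 : force G s p W []) (hv : ValidHist G s h)
    (hf : Follows s p (forcingStrategy G s p W) h) (hc : Complete G s h) : W h := by
  have hfor := force_of_follows h0 h hv hf
  by_cases hend : ended G s h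
  · rwa [force_of_ended hend] at hfor
  · rwa [force_of_full hend (hc.resolve_left hend).not_lt] at hfor

lemma force_other_of_not_force (h : List ℕ) (hnf : ¬ force G s q W h) :
    force G s q.other (fun l => ¬ W l) h := by
  by_cases hend : ended G s h
  · rwa [force_of_ended hend] at hnf ⊢
  by_cases hl : h.length < G.V.card
  · by_cases hm : mover s h.length = q
    · rw [force_of_turn hend hl hm] at hnf
      rw [force_of_wait hend hl (by rw [hm]; exact (Player.other_ne q).symm)]
      exact fun x hxV hxh =>
        force_other_of_not_force (h ++ [x]) fun hfx => hnf ⟨x, hxV, hxh, hfx⟩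
    · rw [force_of_wait hend hl hm] at hnf
      push Not at hnf
      obtain ⟨x, hxV, hxh, hfx⟩ := hnf
      rw [force_of_turn hend hl (Player.eq_other_of_ne hm)]
      exact ⟨x, hxV, hxh, force_other_of_not_force (h ++ [x]) hfx⟩
  · rwa [force_of_full hend hl] at hnf ⊢
termination_by G.V.card - h.length
decreasing_by all_goals simp only [List.length_append, List.length_singleton]; omega

lemma winsAs_of_force (h0 : force G s p (fun h => fills (G.edges p) (picked s p h)) []) :
    WinsAs G s p :=
  ⟨_, forcingStrategy_legal, fun _ => force_of_follows_complete h0⟩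

lemma nonLosingAs_of_not_force
    (h0 : ¬ force G s p.other (fun h => fills (G.edges p.other) (picked s p.other h)) []) :
    NonLosingAs G s p := by
  have hp := force_other_of_not_force [] h0
  rw [Player.other_other] at hp
  exact ⟨_, forcingStrategy_legal, fun _ => force_of_follows_complete hp⟩

theorem determinacy (G : Game) (s : Player) :
    WinsAs G s .L ∨ WinsAs G s .R ∨ (NonLosingAs G s .L ∧ NonLosingAs G s .R) := by
  by_cases hL : force G s .L (fun h => fills (G.edges .L) (picked s .L h)) []
  · exact Or.inl (winsAs_of_force hL)
  by_cases hR : force G s .R (fun h => fills (G.edges .R) (picked s .R h)) []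
  · exact Or.inr (Or.inl (winsAs_of_force hR))
  · exact Or.inr (Or.inr
      ⟨nonLosingAs_of_not_force (p := .L) hR, nonLosingAs_of_not_force (p := .R) hL⟩)

end Determinacy

/-- `a` replays the moves of `h` inside `W`: the same Left moves, and Right's moves possibly
together with moves Left only imagined for Right. -/
def Shadows (s' : Player) (a : List ℕ) (s : Player) (h : List ℕ) (W : Finset ℕ) : Prop :=
  picked s' .L a = picked s .L h ∩ W ∧ picked s .R h ∩ W ⊆ picked s' .R a

namespace Shadows

variable {s s' : Player} {a h : List ℕ} {W : Finset ℕ} {x : ℕ}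

lemma nil : Shadows s' [] s [] W := by simp [Shadows]

lemma append_of_not_mem (hsh : Shadows s' a s h W) (hx : x ∉ W) :
    Shadows s' a s (h ++ [x]) W := by
  have key : ∀ p, picked s p (h ++ [x]) ∩ W = picked s p h ∩ W := fun p => by
    rw [picked_append]
    split_ifs
    exacts [Finset.insert_inter_of_notMem hx, rfl]
  simpa only [Shadows, key] using hsh

lemma append_of_mem (hsh : Shadows s' a s h W) (hm : mover s' a.length = mover s h.length)
    (hx : x ∈ W) : Shadows s' (a ++ [x]) s (h ++ [x]) W := by
  obtain ⟨hL, hR⟩ := hsh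
  cases hq : mover s h.length <;> rw [hq] at hm
  · refine ⟨?_, ?_⟩
    · rw [picked_append_of_eq hm, picked_append_of_eq hq, Finset.insert_inter_of_mem hx, hL]
    · rwa [picked_append_of_ne (by rw [hq]; decide), picked_append_of_ne (by rw [hm]; decide)]
  · refine ⟨?_, ?_⟩
    · rwa [picked_append_of_ne (by rw [hm]; decide), picked_append_of_ne (by rw [hq]; decide)]
    · rw [picked_append_of_eq hm, picked_append_of_eq hq, Finset.insert_inter_of_mem hx]
      exact Finset.insert_subset_insert _ hR

lemma append_right (hsh : Shadows s' a s h W) (hm : mover s' a.length = .R) (y : ℕ) :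
    Shadows s' (a ++ [y]) s h W := by
  refine ⟨?_, ?_⟩
  · rw [picked_append_of_ne (by rw [hm]; decide)]
    exact hsh.1
  · rw [picked_append_of_eq hm]
    exact hsh.2.trans (Finset.subset_insert _ _)

lemma append_of_mem_right (hsh : Shadows s' a s h W) (hm : mover s h.length = .R)
    (hx : x ∈ picked s' .R a) : Shadows s' a s (h ++ [x]) W := by
  refine ⟨?_, ?_⟩
  · rw [picked_append_of_ne (by rw [hm]; decide)]
    exact hsh.1
  · rw [picked_append_of_eq hm]
    intro y hy
    obtain ⟨rfl | hy, hyW⟩ := Finset.mem_inter.mp hy |>.imp_left Finset.mem_insert.mp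
    exacts [hx, hsh.2 (Finset.mem_inter.mpr ⟨hy, hyW⟩)]

lemma mem (hsh : Shadows s' a s h W) {y : ℕ} (hy : y ∈ h) (hyW : y ∈ W) : y ∈ a := by
  rw [← List.mem_toFinset, ← picked_union (s := s')]
  rw [← List.mem_toFinset, ← picked_union (s := s), Finset.mem_union] at hy
  rcases hy with hyL | hyR
  · exact Finset.mem_union_left _ (hsh.1 ▸ Finset.mem_inter.mpr ⟨hyL, hyW⟩)
  · exact Finset.mem_union_right _ (hsh.2 (Finset.mem_inter.mpr ⟨hyR, hyW⟩))

lemma mem_picked_right (hsh : Shadows s' a s h W) (hx : x ∈ a) (hxh : x ∉ h) :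
    x ∈ picked s' .R a := by
  rw [← List.mem_toFinset, ← picked_union (s := s'), Finset.mem_union, hsh.1] at hx
  refine hx.resolve_left fun hxL => hxh ?_
  exact List.mem_toFinset.mp (picked_subset (Finset.mem_inter.mp hxL).1)

lemma fills_left (hsh : Shadows s' a s h W) {E : Finset (Finset ℕ)}
    (hf : fills E (picked s' .L a)) : fills E (picked s .L h) :=
  let ⟨e, he, hes⟩ := hf
  ⟨e, he, hes.trans (hsh.1 ▸ Finset.inter_subset_left)⟩

lemma fills_right (hsh : Shadows s' a s h W) {E : Finset (Finset ℕ)} (hE : ∀ e ∈ E, e ⊆ W)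
    (hf : fills E (picked s .R h)) : fills E (picked s' .R a) :=
  let ⟨e, he, hes⟩ := hf
  ⟨e, he, (Finset.subset_inter hes (hE e he)).trans hsh.2⟩

end Shadows

structure ComponentStrategies (G G' : Game) (τ σ' : Strategy) : Prop where
  disjoint : Disjoint G.V G'.V
  τ_legal : Legal G .R .L τ
  τ_safe : Safe G .R .L τ
  σ_legal : Legal G' .L .L σ'
  σ_wins : Wins G' .L .L σ'
  σ_safe : Safe G' .L .L σ'

/-- An odd-length `b` means Right is to move in it; Left then imagines Right picking a free
vertex. -/
noncomputable def padTurn (V : Finset ℕ) (b : List ℕ) : List ℕ :=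
  if b.length % 2 = 0 then b else b ++ [fresh V b]

section Union

variable (G G' : Game)

/-- How a real move `x` of player `m` on `G ∪ G'` updates Left's imagined plays `a` on `G`
(Right starting) and `b` on `G'` (Left starting). -/
noncomputable def simStep (ab : List ℕ × List ℕ) (m : Player) (x : ℕ) :
    List ℕ × List ℕ :=
  if x ∈ G.V then (ab.1 ++ [x], ab.2)
  else match m with
    | .L => (ab.1, padTurn G'.V ab.2 ++ [x])
    | .R => if x ∈ ab.2 then ab else (ab.1, ab.2 ++ [x])

noncomputable def simulate (h : List ℕ) : List ℕ × List ℕ :=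
  h.zipIdx.foldl (fun ab xi => simStep G G' ab (mover .L xi.2) xi.1) ([], [])

lemma simulate_append (h : List ℕ) (x : ℕ) :
    simulate G G' (h ++ [x]) = simStep G G' (simulate G G' h) (mover .L h.length) x := by
  simp [simulate, List.zipIdx_append, List.foldl_append]

noncomputable def unionStrategy (τ σ' : Strategy) : Strategy := fun h =>
  let a := (simulate G G' h).1
  if a.length % 2 = 1 ∧ a.length < G.V.card then τ a else σ' (padTurn G'.V (simulate G G' h).2)

/-- `a.length % 2 = 1 ∧ a.length < G.V.card` says that Left still owes an answer in `G`. -/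
structure SimInv (τ σ' : Strategy) (h a b : List ℕ) : Prop where
  filter_eq : a = h.filter (· ∈ G.V)
  valid_a : ValidHist G .R a
  follows_a : Follows .R .L τ a
  valid_b : ValidHist G' .L b
  follows_b : Follows .L .L σ' b
  shadows_a : Shadows .R a .L h G.V
  shadows_b : Shadows .L b .L h G'.V
  b_odd : h.length % 2 = 1 ∨ (a.length % 2 = 1 ∧ a.length < G.V.card) → b.length % 2 = 1
  a_settled : h.length % 2 = 1 → ¬ (a.length % 2 = 1 ∧ a.length < G.V.card)

end Union

lemma padTurn_spec {G' : Game} {σ' : Strategy} {b h : List ℕ} (hv : ValidHist G' .L b)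
    (hf : Follows .L .L σ' b) (hsh : Shadows .L b .L h G'.V) (hc : ¬ Complete G' .L b) :
    ValidHist G' .L (padTurn G'.V b) ∧ Follows .L .L σ' (padTurn G'.V b) ∧
      Shadows .L (padTurn G'.V b) .L h G'.V ∧ (padTurn G'.V b).length % 2 = 0 := by
  unfold padTurn
  split_ifs with hb
  · exact ⟨hv, hf, hsh, hb⟩
  have hm : mover .L b.length = .R := mover_of_odd (by omega)
  have hlt : b.length < G'.V.card := hv.length_le_card.lt_of_ne fun hl => hc (Or.inr hl)
  obtain ⟨hfV, hfb⟩ := fresh_spec (hv.exists_free hlt)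
  refine ⟨validHist_append_iff.mpr ⟨hv, hfV, hfb, fun he => hc (Or.inl he)⟩,
    follows_append_iff.mpr ⟨hf, fun hL => absurd (hm.symm.trans hL) (by decide)⟩,
    hsh.append_right hm _, ?_⟩
  simp only [List.length_append, List.length_singleton]
  omega

namespace SimInv

variable {G G' : Game} {τ σ' : Strategy} {h a b : List ℕ} {x : ℕ}

lemma nil : SimInv G G' τ σ' [] [] [] :=
  ⟨rfl, validHist_nil, follows_nil, validHist_nil, follows_nil, Shadows.nil, Shadows.nil,
    by simp, by simp⟩

lemma mem_a (inv : SimInv G G' τ σ' h a b) : x ∈ a ↔ x ∈ h ∧ x ∈ G.V := by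
  simp [inv.filter_eq]

lemma not_ended_a (H : ComponentStrategies G G' τ σ') (inv : SimInv G G' τ σ' h a b)
    (hne : ¬ ended (gunion G G') .L h) : ¬ ended G .R a := fun hend =>
  hne <| Or.inl <| fills_of_subset Finset.subset_union_left <| inv.shadows_a.fills_left <|
    hend.resolve_right (H.τ_safe a inv.valid_a inv.follows_a)

lemma not_complete_of_shadows (H : ComponentStrategies G G' τ σ') {b' : List ℕ}
    (hv : ValidHist G' .L b') (hf : Follows .L .L σ' b') (hsh : Shadows .L b' .L h G'.V)
    (hne : ¬ ended (gunion G G') .L h) : ¬ Complete G' .L b' := fun hc =>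
  hne <| Or.inl <| fills_of_subset Finset.subset_union_right <| hsh.fills_left <|
    H.σ_wins b' hv hf hc

lemma left_move_G (H : ComponentStrategies G G' τ σ') (inv : SimInv G G' τ σ' h a b)
    (hne : ¬ ended (gunion G G') .L h) (hh : h.length % 2 = 0)
    (hpend : a.length % 2 = 1 ∧ a.length < G.V.card) :
    τ a ∈ G.V ∧ τ a ∉ h ∧ SimInv G G' τ σ' (h ++ [τ a]) (a ++ [τ a]) b := by
  have hma : mover .R a.length = .L := mover_of_odd hpend.1
  have hnc : ¬ Complete G .R a := by
    rintro (he | hl)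
    exacts [inv.not_ended_a H hne he, hpend.2.ne hl]
  obtain ⟨hV, ha⟩ := H.τ_legal.mem_of_not_complete inv.valid_a inv.follows_a hnc hma
  have hV' : τ a ∉ G'.V := Finset.disjoint_left.mp H.disjoint hV
  refine ⟨hV, fun hx => ha (inv.mem_a.mpr ⟨hx, hV⟩),
    ⟨?_, ?_, ?_, inv.valid_b, inv.follows_b,
    inv.shadows_a.append_of_mem (hma.trans (mover_of_even hh).symm) hV,
    inv.shadows_b.append_of_not_mem hV', fun _ => inv.b_odd (Or.inr hpend), ?_⟩⟩
  · rw [List.filter_append, ← inv.filter_eq]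
    simp [hV]
  · exact validHist_append_iff.mpr ⟨inv.valid_a, hV, ha, inv.not_ended_a H hne⟩
  · exact follows_append_iff.mpr ⟨inv.follows_a, fun _ => rfl⟩
  · simp only [List.length_append, List.length_singleton]
    omega

lemma left_move_G' (H : ComponentStrategies G G' τ σ') (inv : SimInv G G' τ σ' h a b)
    (hne : ¬ ended (gunion G G') .L h) (hh : h.length % 2 = 0)
    (hpend : ¬ (a.length % 2 = 1 ∧ a.length < G.V.card)) :
    σ' (padTurn G'.V b) ∈ G'.V ∧ σ' (padTurn G'.V b) ∉ h ∧
      SimInv G G' τ σ' (h ++ [σ' (padTurn G'.V b)]) a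
        (padTurn G'.V b ++ [σ' (padTurn G'.V b)]) := by
  obtain ⟨hv₀, hf₀, hsh₀, heven⟩ := padTurn_spec inv.valid_b inv.follows_b inv.shadows_b
    (not_complete_of_shadows H inv.valid_b inv.follows_b inv.shadows_b hne)
  have hc₀ := not_complete_of_shadows H hv₀ hf₀ hsh₀ hne
  have hm₀ : mover .L (padTurn G'.V b).length = .L := mover_of_even heven
  obtain ⟨hV, hb⟩ := H.σ_legal.mem_of_not_complete hv₀ hf₀ hc₀ hm₀
  have hV' : σ' (padTurn G'.V b) ∉ G.V := Finset.disjoint_right.mp H.disjoint hV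
  refine ⟨hV, fun hx => hb (hsh₀.mem hx hV), ⟨?_, inv.valid_a, inv.follows_a, ?_, ?_,
    inv.shadows_a.append_of_not_mem hV',
    hsh₀.append_of_mem (hm₀.trans (mover_of_even hh).symm) hV,
    ?_, fun _ => hpend⟩⟩
  · simp [inv.filter_eq, hV']
  · exact validHist_append_iff.mpr ⟨hv₀, hV, hb, fun he => hc₀ (Or.inl he)⟩
  · exact follows_append_iff.mpr ⟨hf₀, fun _ => rfl⟩
  · simp only [List.length_append, List.length_singleton]
    omega

lemma right_move_G (H : ComponentStrategies G G' τ σ') (inv : SimInv G G' τ σ' h a b)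
    (hne : ¬ ended (gunion G G') .L h) (hh : h.length % 2 = 1) (hx : x ∈ G.V) (hxh : x ∉ h) :
    SimInv G G' τ σ' (h ++ [x]) (a ++ [x]) b := by
  have hxa : x ∉ a := fun hxa => hxh (inv.mem_a.mp hxa).1
  have hlt := inv.valid_a.length_lt_card hx hxa
  have hma : mover .R a.length = .R := mover_of_even (by have := inv.a_settled hh; omega)
  refine ⟨?_, validHist_append_iff.mpr ⟨inv.valid_a, hx, hxa, inv.not_ended_a H hne⟩,
    follows_append_iff.mpr ⟨inv.follows_a, fun hL => absurd (hma.symm.trans hL) (by decide)⟩,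
    inv.valid_b, inv.follows_b,
    inv.shadows_a.append_of_mem (hma.trans (mover_of_odd (s := .L) hh).symm) hx,
    inv.shadows_b.append_of_not_mem (Finset.disjoint_left.mp H.disjoint hx),
    fun _ => inv.b_odd (Or.inl hh), ?_⟩
  · simp [inv.filter_eq, hx]
  · simp only [List.length_append, List.length_singleton]
    omega

lemma right_move_mem (inv : SimInv G G' τ σ' h a b) (hh : h.length % 2 = 1) (hx : x ∉ G.V)
    (hxh : x ∉ h) (hxb : x ∈ b) : SimInv G G' τ σ' (h ++ [x]) a b := by
  refine ⟨?_, inv.valid_a, inv.follows_a, inv.valid_b, inv.follows_b,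
    inv.shadows_a.append_of_not_mem hx,
    inv.shadows_b.append_of_mem_right (mover_of_odd hh) (inv.shadows_b.mem_picked_right hxb hxh),
    fun _ => inv.b_odd (Or.inl hh), ?_⟩
  · simp [inv.filter_eq, hx]
  · simp only [List.length_append, List.length_singleton]
    omega

lemma right_move_fresh (H : ComponentStrategies G G' τ σ') (inv : SimInv G G' τ σ' h a b)
    (hne : ¬ ended (gunion G G') .L h) (hh : h.length % 2 = 1) (hx : x ∈ G'.V) (hxb : x ∉ b) :
    SimInv G G' τ σ' (h ++ [x]) a (b ++ [x]) := by
  have hmb : mover .L b.length = .R := mover_of_odd (inv.b_odd (Or.inl hh))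
  have hx' : x ∉ G.V := Finset.disjoint_right.mp H.disjoint hx
  have hnc := not_complete_of_shadows H inv.valid_b inv.follows_b inv.shadows_b hne
  refine ⟨?_, inv.valid_a, inv.follows_a,
    validHist_append_iff.mpr ⟨inv.valid_b, hx, hxb, fun he => hnc (Or.inl he)⟩,
    follows_append_iff.mpr ⟨inv.follows_b, fun hL => absurd (hmb.symm.trans hL) (by decide)⟩,
    inv.shadows_a.append_of_not_mem hx',
    inv.shadows_b.append_of_mem (hmb.trans (mover_of_odd (s := .L) hh).symm) hx, ?_, ?_⟩
  · simp [inv.filter_eq, hx']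
  · have := inv.a_settled hh
    simp only [List.length_append, List.length_singleton]
    omega
  · simp only [List.length_append, List.length_singleton]
    omega

end SimInv

section UnionStrategy

variable {G G' : Game} {τ σ' : Strategy}

lemma simInv_simulate (H : ComponentStrategies G G' τ σ') (h : List ℕ)
    (hv : ValidHist (gunion G G') .L h) (hf : Follows .L .L (unionStrategy G G' τ σ') h) :
    SimInv G G' τ σ' h (simulate G G' h).1 (simulate G G' h).2 := by
  induction h using List.reverseRecOn with
  | nil => exact SimInv.nil
  | append_singleton l x ih =>
    obtain ⟨hvl, hxV, hxl, hne⟩ := validHist_append_iff.mp hv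
    obtain ⟨hfl, hx⟩ := follows_append_iff.mp hf
    have inv := ih hvl hfl
    simp only [unionStrategy] at hx
    rw [simulate_append]
    generalize simulate G G' l = ab at inv hx
    obtain ⟨a, b⟩ := ab
    rcases Nat.mod_two_eq_zero_or_one l.length with hl | hl
    · have hm : mover .L l.length = .L := mover_of_even hl
      rw [hx hm, hm]
      split_ifs with hpend
      · obtain ⟨hV, -, inv'⟩ := inv.left_move_G H hne hl hpend
        simpa [simStep, hV] using inv'
      · obtain ⟨hV, -, inv'⟩ := inv.left_move_G' H hne hl hpend
        simpa [simStep, Finset.disjoint_right.mp H.disjoint hV] using inv'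
    · have hm : mover .L l.length = .R := mover_of_odd hl
      rw [hm]
      by_cases hxG : x ∈ G.V
      · simpa [simStep, hxG] using inv.right_move_G H hne hl hxG hxl
      have hxG' : x ∈ G'.V := (Finset.mem_union.mp hxV).resolve_left hxG
      by_cases hxb : x ∈ b
      · simpa [simStep, hxG, hxb] using inv.right_move_mem hl hxG hxl hxb
      · simpa [simStep, hxG, hxb] using inv.right_move_fresh H hne hl hxG' hxb

lemma unionStrategy_legal (H : ComponentStrategies G G' τ σ') :
    Legal (gunion G G') .L .L (unionStrategy G G' τ σ') := by
  intro h hv hf hne _ hm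
  have inv := simInv_simulate H h hv hf
  have hh : h.length % 2 = 0 := mover_eq_self_iff.mp hm
  simp only [unionStrategy]
  split_ifs with hpend
  · obtain ⟨hV, hxh, -⟩ := inv.left_move_G H hne hh hpend
    exact ⟨Finset.mem_union_left _ hV, hxh⟩
  · obtain ⟨hV, hxh, -⟩ := inv.left_move_G' H hne hh hpend
    exact ⟨Finset.mem_union_right _ hV, hxh⟩

lemma unionStrategy_wins (hG : WellFormed G) (hG' : WellFormed G')
    (H : ComponentStrategies G G' τ σ') :
    Wins (gunion G G') .L .L (unionStrategy G G' τ σ') := by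
  intro h hv hf hc
  have inv := simInv_simulate H h hv hf
  by_cases hend : ended (gunion G G') .L h
  · refine hend.resolve_right ?_
    rintro ⟨e, he, hes⟩
    rcases Finset.mem_union.mp he with heG | heG'
    · exact H.τ_safe _ inv.valid_a inv.follows_a
        (inv.shadows_a.fills_right (fun e he => (hG.2 e he).1) ⟨e, heG, hes⟩)
    · exact H.σ_safe _ inv.valid_b inv.follows_b
        (inv.shadows_b.fills_right (fun e he => (hG'.2 e he).1) ⟨e, heG', hes⟩)
  · have hfull : h.length = (gunion G G').V.card := hc.resolve_left hend
    have hb : (simulate G G' h).2.length = G'.V.card := inv.valid_b.length_eq_card fun y hy =>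
      inv.shadows_b.mem (hv.mem_of_length_eq hfull (Finset.mem_union_right _ hy)) hy
    exact fills_of_subset Finset.subset_union_right <| inv.shadows_b.fills_left <|
      H.σ_wins _ inv.valid_b inv.follows_b (Or.inr hb)

end UnionStrategy

/-- If `o(G) ∈ {L, L⁻}` and `o(G') = N`, then Left has a winning strategy on `G ∪ G'`
as first player, i.e. `o(G ∪ G') ∈ {L, L⁻, N}`. -/
theorem union_LLminus_N (G G' : Game) (hG : WellFormed G) (hG' : WellFormed G')
    (hdisj : Disjoint G.V G'.V)
    (hGo : hasOutcome G oL ∨ hasOutcome G oLminus) (hG'o : hasOutcome G' oN) :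
    WinsAs (gunion G G') .L .L ∧
      ∃ o : Outcome, hasOutcome (gunion G G') o ∧ (o = oL ∨ o = oLminus ∨ o = oN) := by
  obtain ⟨σ', hσ, hσW⟩ : WinsAs G' .L .L := hG'o.1
  obtain ⟨τ, hτ, hτS⟩ : ∃ τ, Legal G .R .L τ ∧ Safe G .R .L τ := by
    rcases hGo with hL | hLm
    · obtain ⟨τ, hτ, hτW⟩ : WinsAs G .R .L := hL.2
      exact ⟨τ, hτ, Wins.safe hG hτW⟩
    · obtain ⟨τ, hτ, hτN⟩ : NonLosingAs G .R .L := hLm.2.1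
      exact ⟨τ, hτ, safe_of_nonLosing hτN⟩
  have H : ComponentStrategies G G' τ σ' := ⟨hdisj, hτ, hτS, hσ, hσW, Wins.safe hG' hσW⟩
  have hwin : WinsAs (gunion G G') .L .L :=
    ⟨_, unionStrategy_legal H, unionStrategy_wins hG hG' H⟩
  refine ⟨hwin, ?_⟩
  rcases determinacy (gunion G G') .R with hL | hR | hD
  · exact ⟨oL, ⟨hwin, hL⟩, Or.inl rfl⟩
  · exact ⟨oN, ⟨hwin, hR⟩, Or.inr (Or.inr rfl)⟩
  · exact ⟨oLminus, ⟨hwin, hD⟩, Or.inr (Or.inl rfl)⟩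

end APG
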